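/- arXiv:2006.04973 — 3 statements merged into one kernel-verified Lean document; each statement's English description precedes it below -/
import Mathlib

section
/- If the dyadic step function f_A^m with coefficient vector A ∈ ℝ^{2^m} satisfies the constraint system (8) (i.e., for every i ∈ {1,…,N}, y(t_i) = y(t₀)·e^{−(t_i−t₀)/τ} + (1/τ)·∫_{t₀}^{t_i} e^{(α−t_i)/τ}·f_A^m(α) dα), then A satisfies the linear system Y = V·A. -/
open MeasureTheory intervalIntegral

/-- The dyadic step function on `[t₀, tN)` determined by a coefficient vector
`A ∈ ℝ^(2^m)`: it takes the value `A k` on the interval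
`[t₀ + k·Δt/2^m, t₀ + (k+1)·Δt/2^m)` where `Δt = tN - t₀`, and `0` outside `[t₀, tN)`. -/
noncomputable def dyadicStep (t₀ tN : ℝ) (m : ℕ) (A : Fin (2 ^ m) → ℝ) (α : ℝ) : ℝ :=
  ∑ k : Fin (2 ^ m),
    if t₀ + ((k : ℕ) : ℝ) * (tN - t₀) / 2 ^ m ≤ α ∧
        α < t₀ + (((k : ℕ) : ℝ) + 1) * (tN - t₀) / 2 ^ m
    then A k else 0

/-!
On the `k`-th dyadic cell the step function is the constant `a_k`, so the integral in (8) splits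
into one integral of `e^{(α - t_i)/τ}` per cell, truncated at `t_i`. Evaluated, each is
`τ e^{-(t_i - t₀)/τ} (e^{γmax} - e^{γmin}) a_k`, or `0` when the cell starts after `t_i`;
the factor `1/τ` in (8) cancels the `τ`, leaving the row of `Y = V·A` that belongs to `t_i`.
-/

open Set

theorem dyadicStep_eq_sum_indicator (t₀ tN : ℝ) (m : ℕ) (A : Fin (2 ^ m) → ℝ) (α : ℝ) :
    dyadicStep t₀ tN m A α = ∑ k : Fin (2 ^ m),
      (Ico (t₀ + (k : ℕ) * (tN - t₀) / 2 ^ m) (t₀ + ((k : ℕ) + 1) * (tN - t₀) / 2 ^ m)).indicator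
        (fun _ ↦ A k) α := by
  simp only [dyadicStep, indicator_apply, mem_Ico]

theorem IntervalIntegrable.indicator {E : Type*} [NormedAddCommGroup E] {f : ℝ → E}
    {μ : Measure ℝ} {a b : ℝ} (hf : IntervalIntegrable f μ a b) {s : Set ℝ}
    (hs : MeasurableSet s) : IntervalIntegrable (s.indicator f) μ a b :=
  intervalIntegrable_iff.2 ((intervalIntegrable_iff.1 hf).indicator hs)

theorem intervalIntegral.integral_indicator_Ico_of_le {E : Type*} [NormedAddCommGroup E]
    [NormedSpace ℝ E] {μ : Measure ℝ} [NullSingletonClass μ] (f : ℝ → E) {a b c d : ℝ}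
    (hab : a ≤ b) (hac : a ≤ c) :
    ∫ x in a..b, (Ico c d).indicator f x ∂μ =
      if c < min b d then ∫ x in c..min b d, f x ∂μ else 0 := by
  have hIco : (Ico c d).indicator f =ᵐ[μ.restrict (Ioc a b)] (Ioc c d).indicator f :=
    ae_restrict_of_ae (indicator_ae_eq_of_ae_eq_set Ico_ae_eq_Ioc)
  rw [integral_of_le hab, MeasureTheory.integral_congr_ae hIco,
    setIntegral_indicator measurableSet_Ioc, Ioc_inter_Ioc, max_eq_right hac]
  split_ifs with h
  · rw [integral_of_le h.le]
  · rw [Ioc_eq_empty h, Measure.restrict_empty, integral_zero_measure]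

theorem inv_mul_integral_exp_sub_div (τ a b T : ℝ) :
    τ⁻¹ * ∫ x in a..b, Real.exp ((x - T) / τ) =
      Real.exp ((b - T) / τ) - Real.exp ((a - T) / τ) := by
  rw [integral_comp_sub_right (fun y ↦ Real.exp (y / τ)), ← smul_eq_mul,
    inv_smul_integral_comp_div, integral_exp]

/-- `p / τ` and `min (q / τ) ((b - a) / τ)` are the paper's `γmin` and `γmax`, measured from `a`. -/
theorem inv_mul_integral_exp_mul_indicator_Ico {τ : ℝ} (hτ : 0 < τ) {a b p : ℝ} (hab : a ≤ b)
    (hp : 0 ≤ p) (q C : ℝ) :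
    τ⁻¹ * ∫ x in a..b, Real.exp ((x - b) / τ) * (Ico (a + p) (a + q)).indicator (fun _ ↦ C) x =
      (if p / τ < min (q / τ) ((b - a) / τ) then
        Real.exp (-(b - a) / τ) * (Real.exp (min (q / τ) ((b - a) / τ)) - Real.exp (p / τ))
      else 0) * C := by
  have hmin : min (q / τ) ((b - a) / τ) = (min b (a + q) - a) / τ := by
    rw [min_comm, min_div_div_right hτ.le, ← min_sub_sub_right, add_sub_cancel_left]
  have hp_shift : p / τ = (a + p - a) / τ := by rw [add_sub_cancel_left]
  have hcond : a + p < min b (a + q) ↔ p / τ < (min b (a + q) - a) / τ := by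
    rw [hp_shift, div_lt_div_iff_of_pos_right hτ, sub_lt_sub_iff_right]
  have hshift (u : ℝ) :
      Real.exp (-(b - a) / τ) * Real.exp ((u - a) / τ) = Real.exp ((u - b) / τ) := by
    rw [← Real.exp_add]; ring_nf
  simp only [← indicator_mul_right _ (fun x ↦ Real.exp ((x - b) / τ))]
  rw [integral_indicator_Ico_of_le _ hab (by linarith), hmin]
  by_cases h : a + p < min b (a + q)
  · rw [if_pos h, if_pos (hcond.1 h), intervalIntegral.integral_mul_const, ← mul_assoc,
      inv_mul_integral_exp_sub_div, mul_sub, hp_shift, hshift, hshift]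
  · rw [if_neg h, if_neg (mt hcond.2 h), mul_zero, zero_mul]

/-- Theorem 1 of the paper: if the dyadic step function `f_A^m`
satisfies the constraint system (8), then the coefficient vector `A` satisfies the
linear system `Y = V·A`. -/
theorem constraints_imply_linear_system
    (τ : ℝ) (hτ : 0 < τ) (m N : ℕ)
    (t : Fin (N + 1) → ℝ) (ht : StrictMono t)
    (y : Fin (N + 1) → ℝ)
    (A : Fin (2 ^ m) → ℝ)
    (hconstr : ∀ i : Fin N,
      y i.succ = y 0 * Real.exp (-(t i.succ - t 0) / τ) +
        (1 / τ) * ∫ α in (t 0)..(t i.succ),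
          Real.exp ((α - t i.succ) / τ) * dyadicStep (t 0) (t (Fin.last N)) m A α) :
    ∀ j : Fin N,
      y j.succ - y 0 * Real.exp (-(t j.succ - t 0) / τ) =
      ∑ k : Fin (2 ^ m),
        (if ((k : ℕ) : ℝ) * (t (Fin.last N) - t 0) / (2 ^ m * τ) <
              min ((((k : ℕ) : ℝ) + 1) * (t (Fin.last N) - t 0) / (2 ^ m * τ))
                ((t j.succ - t 0) / τ)
          then Real.exp (-(t j.succ - t 0) / τ) *
              (Real.exp (min ((((k : ℕ) : ℝ) + 1) * (t (Fin.last N) - t 0) / (2 ^ m * τ))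
                  ((t j.succ - t 0) / τ)) -
                Real.exp (((k : ℕ) : ℝ) * (t (Fin.last N) - t 0) / (2 ^ m * τ)))
          else 0) * A k := by
  intro j
  have hj : t 0 ≤ t j.succ := ht.monotone (Fin.zero_le _)
  have hΔ : 0 ≤ t (Fin.last N) - t 0 := sub_nonneg.2 (ht.monotone (Fin.zero_le _))
  simp only [hconstr j, add_sub_cancel_left, one_div, dyadicStep_eq_sum_indicator, Finset.mul_sum]
  rw [integral_finsetSum fun k _ ↦
      (intervalIntegrable_const.indicator measurableSet_Ico).continuousOn_mul (by fun_prop),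
    Finset.mul_sum]
  simp only [div_mul_eq_div_div]
  exact Finset.sum_congr rfl fun k _ ↦
    inv_mul_integral_exp_mul_indicator_Ico hτ hj (by positivity) _ _
end

section
/- Conversely, if a coefficient vector A ∈ ℝ^{2^m} satisfies the linear system Y = V·A, then the dyadic step function f_A^m satisfies the constraint system (8): for every i ∈ {1,…,N}, y(t_i) = y(t₀)·e^{−(t_i−t₀)/τ} + (1/τ)·∫_{t₀}^{t_i} e^{(α−t_i)/τ}·f_A^m(α) dα. -/
open MeasureTheory intervalIntegral

/-!
Write `f_A^m = ∑ₖ aₖ 𝟙_{Cₖ}` over the dyadic cells `Cₖ` and factor the kernel as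
`e^{(α - t_i)/τ} = e^{-(t_i - t₀)/τ} e^{(α - t₀)/τ}`. The integral of `e^{(α - t₀)/τ}/τ` over
`Cₖ ∩ [t₀, t_i]` is `e^{γmax} - e^{γmin}` (or `0` when that set is null), so the integral term
of (8) is exactly `(V A)_{i-1} = Y_{i-1}`.
-/

open Real Set

section
variable {τ t₀ T a b : ℝ}

theorem intervalIntegral_indicator_Ico {E : Type*} [NormedAddCommGroup E] [NormedSpace ℝ E]
    {μ : Measure ℝ} [NullSingletonClass μ] (f : ℝ → E) (ha : t₀ ≤ a) (hT : t₀ ≤ T) :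
    ∫ x in t₀..T, (Ico a b).indicator f x ∂μ = ∫ x in a..max a (min b T), f x ∂μ := by
  have hIoc : (Ico a b ∩ Ioc t₀ T : Set ℝ) =ᵐ[μ] Ioc a (max a (min b T)) := by
    have hmax : Ioc a (max a (min b T)) = Ioc a (min b T) := by
      ext x
      simp only [mem_Ioc, le_max_iff]
      grind
    have h := ae_eq_set_inter (Ico_ae_eq_Ioc (μ := μ) (a := a) (b := b))
      (Filter.EventuallyEq.refl _ (Ioc t₀ T))
    rwa [Ioc_inter_Ioc, max_eq_left ha, ← hmax] at h
  rw [integral_of_le hT, integral_of_le (le_max_left _ _),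
    MeasureTheory.integral_indicator measurableSet_Ico, Measure.restrict_restrict measurableSet_Ico,
    setIntegral_congr_set hIoc]

theorem integral_exp_sub_div (hτ : τ ≠ 0) (c : ℝ) :
    ∫ x in a..b, exp ((x - c) / τ) = τ * (exp ((b - c) / τ) - exp ((a - c) / τ)) := by
  simp only [sub_div]
  rw [integral_comp_div_sub (f := exp) hτ, integral_exp, smul_eq_mul]

theorem ite_lt_exp_sub_exp (u v : ℝ) :
    (if u < v then exp v - exp u else 0) = exp (max u v) - exp u := by
  split_ifs with h
  · rw [max_eq_right h.le]
  · rw [max_eq_left (not_lt.1 h), sub_self]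

theorem one_div_mul_integral_indicator_Ico_exp (hτ : 0 < τ) (ha : t₀ ≤ a)
    (hT : t₀ ≤ T) :
    (1 / τ) * ∫ x in t₀..T, (Ico a b).indicator (fun x => exp ((x - t₀) / τ)) x =
      if (a - t₀) / τ < min ((b - t₀) / τ) ((T - t₀) / τ) then
        exp (min ((b - t₀) / τ) ((T - t₀) / τ)) - exp ((a - t₀) / τ)
      else 0 := by
  rw [intervalIntegral_indicator_Ico _ ha hT, integral_exp_sub_div hτ.ne', ite_lt_exp_sub_exp,
    min_div_div_right hτ.le, min_sub_sub_right, max_div_div_right hτ.le, max_sub_sub_right,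
    one_div, inv_mul_cancel_left₀ hτ.ne']

end

/-- The entry `[V]_{j,k}` of the paper, with `T = t_{j+1}`. -/
noncomputable def dyadicResponse (τ t₀ tN T : ℝ) (m k : ℕ) : ℝ :=
  if (k : ℝ) * (tN - t₀) / (2 ^ m * τ) <
      min (((k : ℝ) + 1) * (tN - t₀) / (2 ^ m * τ)) ((T - t₀) / τ)
  then exp (-(T - t₀) / τ) *
    (exp (min (((k : ℝ) + 1) * (tN - t₀) / (2 ^ m * τ)) ((T - t₀) / τ)) -
      exp ((k : ℝ) * (tN - t₀) / (2 ^ m * τ)))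
  else 0

def dyadicCell (t₀ tN : ℝ) (m k : ℕ) : Set ℝ :=
  Ico (t₀ + k * (tN - t₀) / 2 ^ m) (t₀ + (k + 1) * (tN - t₀) / 2 ^ m)

theorem exp_mul_dyadicStep (τ t₀ tN T : ℝ) (m : ℕ) (A : Fin (2 ^ m) → ℝ) (α : ℝ) :
    exp ((α - T) / τ) * dyadicStep t₀ tN m A α = exp (-(T - t₀) / τ) * ∑ k : Fin (2 ^ m),
      A k * (dyadicCell t₀ tN m k).indicator (fun x => exp ((x - t₀) / τ)) α := by
  have hexp : exp ((α - T) / τ) = exp (-(T - t₀) / τ) * exp ((α - t₀) / τ) := by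
    rw [← exp_add]; ring_nf
  simp only [dyadicStep, dyadicCell, Finset.mul_sum, indicator_apply, mem_Ico, hexp]
  refine Finset.sum_congr rfl fun k _ => ?_
  split_ifs <;> ring

theorem one_div_mul_integral_exp_mul_dyadicStep {τ t₀ tN T : ℝ} (hτ : 0 < τ) (htN : t₀ ≤ tN)
    (hT : t₀ ≤ T) (m : ℕ) (A : Fin (2 ^ m) → ℝ) :
    (1 / τ) * ∫ α in t₀..T, exp ((α - T) / τ) * dyadicStep t₀ tN m A α =
      ∑ k : Fin (2 ^ m), dyadicResponse τ t₀ tN T m k * A k := by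
  have hint (k : ℕ) : IntervalIntegrable
      ((dyadicCell t₀ tN m k).indicator fun x => exp ((x - t₀) / τ)) volume t₀ T := by
    have hexp := intervalIntegrable_iff.1 <|
      (show Continuous fun x => exp ((x - t₀) / τ) by fun_prop).intervalIntegrable
        (μ := volume) t₀ T
    exact intervalIntegrable_iff.2 (hexp.indicator measurableSet_Ico)
  have hleft (k : ℕ) : t₀ ≤ t₀ + k * (tN - t₀) / 2 ^ m :=
    le_add_of_nonneg_right (by have := sub_nonneg.2 htN; positivity)
  have hγ (c : ℝ) : (t₀ + c * (tN - t₀) / 2 ^ m - t₀) / τ = c * (tN - t₀) / (2 ^ m * τ) := by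
    field_simp; ring
  simp_rw [exp_mul_dyadicStep, intervalIntegral.integral_const_mul,
    intervalIntegral.integral_finsetSum fun (k : Fin (2 ^ m)) _ => (hint k).const_mul (A k),
    Finset.mul_sum, intervalIntegral.integral_const_mul]
  refine Finset.sum_congr rfl fun k _ => ?_
  calc _ = exp (-(T - t₀) / τ) * ((1 / τ) * ∫ x in t₀..T,
        (dyadicCell t₀ tN m k).indicator (fun x => exp ((x - t₀) / τ)) x) * A k := by ring
    _ = _ := by
      rw [dyadicCell, one_div_mul_integral_indicator_Ico_exp hτ (hleft k) hT, hγ, hγ,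
        dyadicResponse, mul_ite, mul_zero]

/-- converse direction of Theorem 1 of the paper: if the coefficient
vector `A` satisfies the linear system `Y = V·A`, then the dyadic step function `f_A^m`
satisfies the constraint system (8). -/
theorem linear_system_implies_constraints
    (τ : ℝ) (hτ : 0 < τ) (m N : ℕ)
    (t : Fin (N + 1) → ℝ) (ht : StrictMono t)
    (y : Fin (N + 1) → ℝ)
    (A : Fin (2 ^ m) → ℝ)
    (hlin : ∀ j : Fin N,
      y j.succ - y 0 * Real.exp (-(t j.succ - t 0) / τ) =
      ∑ k : Fin (2 ^ m),
        (if ((k : ℕ) : ℝ) * (t (Fin.last N) - t 0) / (2 ^ m * τ) <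
              min ((((k : ℕ) : ℝ) + 1) * (t (Fin.last N) - t 0) / (2 ^ m * τ))
                ((t j.succ - t 0) / τ)
          then Real.exp (-(t j.succ - t 0) / τ) *
              (Real.exp (min ((((k : ℕ) : ℝ) + 1) * (t (Fin.last N) - t 0) / (2 ^ m * τ))
                  ((t j.succ - t 0) / τ)) -
                Real.exp (((k : ℕ) : ℝ) * (t (Fin.last N) - t 0) / (2 ^ m * τ)))
          else 0) * A k) :
    ∀ i : Fin N,
      y i.succ = y 0 * Real.exp (-(t i.succ - t 0) / τ) +
        (1 / τ) * ∫ α in (t 0)..(t i.succ),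
          Real.exp ((α - t i.succ) / τ) * dyadicStep (t 0) (t (Fin.last N)) m A α := by
  intro i
  rw [one_div_mul_integral_exp_mul_dyadicStep hτ (ht.monotone (Fin.zero_le _))
    (ht.monotone (Fin.zero_le _))]
  exact eq_add_of_sub_eq' (hlin i)
end

section
/- Suppose for some i ∈ {0,…,N−1} there exist indices 0 ≤ p < q < 2^m such that both dyadic intervals [t₀ + p·Δt/2^m, t₀ + (p+1)·Δt/2^m) and [t₀ + q·Δt/2^m, t₀ + (q+1)·Δt/2^m) are contained in [t_i, t_{i+1}). Then the vector w ∈ ℝ^{2^m} with w_p = e^{(q+1)·Δt/(2^m·τ)} − e^{q·Δt/(2^m·τ)}, w_q = −(e^{(p+1)·Δt/(2^m·τ)} − e^{p·Δt/(2^m·τ)}), and all other components zero, is nonzero and satisfies V·w = 0. Consequently, if the linear system Y = V·A has a solution, it has infinitely many solutions. -/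
/-!
In units of `τ`, the entry `V j k` is the integral of `exp (u - s_j)` over the part of the
`k`-th dyadic cell lying before the sample time `s_j`. A cell contained in `[t_i, t_{i+1})` is
therefore either untouched by row `j` (if `j < i`) or fully covered by it (if `j ≥ i`), and in the
latter case its entry is `exp (-s_j)` times a constant depending only on the cell. For two such
cells the columns are proportional, so the cross combination `w` of the two columns vanishes; adding
multiples of `w` to one solution gives infinitely many.
-/

open Real Matrix

theorem Matrix.setOf_mulVec_eq_infinite {R ι κ : Type*} [CommRing R] [IsDomain R] [Infinite R]
    [Fintype κ] {V : Matrix ι κ R} {A w : κ → R} {Y : ι → R}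
    (hA : V *ᵥ A = Y) (hw : V *ᵥ w = 0) (hw0 : w ≠ 0) :
    {x : κ → R | V *ᵥ x = Y}.Infinite :=
  Set.infinite_of_injective_forall_mem (f := fun c : R => A + c • w)
    ((add_right_injective A).comp (smul_left_injective R hw0))
    fun c => by
      rw [Set.mem_ofPred_eq, mulVec_add, mulVec_smul, hA, hw, smul_zero, add_zero]

theorem Monotone.apply_succ_le_apply_castSucc_or_apply_succ_le_apply_succ {α : Type*}
    [Preorder α] {N : ℕ} {f : Fin (N + 1) → α} (hf : Monotone f) (i j : Fin N) :
    f j.succ ≤ f i.castSucc ∨ f i.succ ≤ f j.succ := by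
  rcases lt_or_ge j i with hji | hij
  · exact .inl (hf (Fin.succ_le_castSucc_iff.2 hji))
  · exact .inr (hf (Fin.succ_le_succ_iff.2 hij))

/-- The entry of `V` for the cell `[a, b)` and the sample at time `s` (all in units of `τ`):
the integral of `exp (u - s)` over `[a, min b s]`. -/
noncomputable def cellMass (a b s : ℝ) : ℝ :=
  if a < min b s then exp (-s) * (exp (min b s) - exp a) else 0

theorem cellMass_of_le_left {a b s : ℝ} (h : s ≤ a) : cellMass a b s = 0 :=
  if_neg (not_lt.2 ((min_le_right b s).trans h))

theorem cellMass_of_le_right {a b s : ℝ} (hab : a < b) (h : b ≤ s) :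
    cellMass a b s = exp (-s) * (exp b - exp a) := by
  rw [cellMass, min_eq_left h, if_pos hab]

theorem cellMass_mul_add_cellMass_mul_neg_eq_zero {a b c d s : ℝ} (hab : a < b) (hcd : c < d)
    (hac : a ≤ c) (hbd : b ≤ d) (hs : s ≤ a ∨ d ≤ s) :
    cellMass a b s * (exp d - exp c) + cellMass c d s * -(exp b - exp a) = 0 := by
  rcases hs with hs | hs
  · rw [cellMass_of_le_left hs, cellMass_of_le_left (hs.trans hac)]
    ring
  · rw [cellMass_of_le_right hab (hbd.trans hs), cellMass_of_le_right hcd hs]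
    ring

theorem linear_system_underdetermined_general
    (τ : ℝ) (hτ : 0 < τ) (m N : ℕ)
    (t : Fin (N + 1) → ℝ) (ht : StrictMono t)
    (V : Matrix (Fin N) (Fin (2 ^ m)) ℝ)
    (hV : ∀ (j : Fin N) (k : Fin (2 ^ m)),
      V j k =
        if ((k : ℕ) : ℝ) * (t (Fin.last N) - t 0) / (2 ^ m * τ) <
            min ((((k : ℕ) : ℝ) + 1) * (t (Fin.last N) - t 0) / (2 ^ m * τ))
              ((t j.succ - t 0) / τ)
        then Real.exp (-(t j.succ - t 0) / τ) *
            (Real.exp (min ((((k : ℕ) : ℝ) + 1) * (t (Fin.last N) - t 0) / (2 ^ m * τ))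
                ((t j.succ - t 0) / τ)) -
              Real.exp (((k : ℕ) : ℝ) * (t (Fin.last N) - t 0) / (2 ^ m * τ)))
        else 0)
    (Y : Fin N → ℝ)
    (i : Fin N) (p q : ℕ) (hpq : p < q) (hq : q < 2 ^ m)
    (hp_sub : Set.Ico (t 0 + (p : ℝ) * (t (Fin.last N) - t 0) / 2 ^ m)
        (t 0 + ((p : ℝ) + 1) * (t (Fin.last N) - t 0) / 2 ^ m) ⊆
      Set.Ico (t i.castSucc) (t i.succ))
    (hq_sub : Set.Ico (t 0 + (q : ℝ) * (t (Fin.last N) - t 0) / 2 ^ m)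
        (t 0 + ((q : ℝ) + 1) * (t (Fin.last N) - t 0) / 2 ^ m) ⊆
      Set.Ico (t i.castSucc) (t i.succ))
    (w : Fin (2 ^ m) → ℝ)
    (hw : ∀ k : Fin (2 ^ m),
      w k =
        if (k : ℕ) = p then
          Real.exp (((q : ℝ) + 1) * (t (Fin.last N) - t 0) / (2 ^ m * τ)) -
            Real.exp ((q : ℝ) * (t (Fin.last N) - t 0) / (2 ^ m * τ))
        else if (k : ℕ) = q then
          -(Real.exp (((p : ℝ) + 1) * (t (Fin.last N) - t 0) / (2 ^ m * τ)) -
            Real.exp ((p : ℝ) * (t (Fin.last N) - t 0) / (2 ^ m * τ)))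
        else 0) :
    w ≠ 0 ∧ V.mulVec w = 0 ∧
      ((∃ A : Fin (2 ^ m) → ℝ, V.mulVec A = Y) →
        {A : Fin (2 ^ m) → ℝ | V.mulVec A = Y}.Infinite) := by
  set Δ := t (Fin.last N) - t 0
  have hΔ : 0 < Δ :=
    sub_pos.2 ((ht.monotone (Fin.zero_le _)).trans_lt (ht (Fin.castSucc_lt_last i)))
  set γ : ℝ → ℝ := fun x => x * Δ / (2 ^ m * τ)
  have hγ : StrictMono γ := fun x y hxy => by dsimp only [γ]; gcongr
  have hp_start : (t i.castSucc - t 0) / τ ≤ γ p := by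
    show _ ≤ (p : ℝ) * Δ / (2 ^ m * τ)
    have := ((Set.Ico_subset_Ico_iff (by gcongr; linarith)).1 hp_sub).1
    rw [← div_div]
    gcongr
    linarith
  have hq_end : γ (q + 1) ≤ (t i.succ - t 0) / τ := by
    show ((q : ℝ) + 1) * Δ / (2 ^ m * τ) ≤ _
    have := ((Set.Ico_subset_Ico_iff (by gcongr; linarith)).1 hq_sub).2
    rw [← div_div]
    gcongr
    linarith
  let pk : Fin (2 ^ m) := ⟨p, hpq.trans hq⟩
  let qk : Fin (2 ^ m) := ⟨q, hq⟩
  have hrow (j : Fin N) : V j pk * w pk + V j qk * w qk = 0 := by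
    rw [hV, hV, hw, hw, if_pos rfl, if_neg hpq.ne', if_pos rfl, neg_div]
    refine cellMass_mul_add_cellMass_mul_neg_eq_zero (hγ (lt_add_one _)) (hγ (lt_add_one _))
      (hγ.monotone (by exact_mod_cast hpq.le)) (hγ.monotone (by gcongr)) ?_
    refine (ht.monotone.apply_succ_le_apply_castSucc_or_apply_succ_le_apply_succ i j).imp
      (fun h => le_trans ?_ hp_start) (fun h => hq_end.trans ?_) <;> gcongr
  have hwp : 0 < w pk := by
    rw [hw, if_pos rfl, sub_pos]
    exact exp_lt_exp.2 (hγ (lt_add_one _))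
  have hw0 : w ≠ 0 := fun h => hwp.ne' (congrFun h pk)
  have hVw : V *ᵥ w = 0 := funext fun j =>
    (Fintype.sum_eq_add (f := fun k => V j k * w k) pk qk (Fin.ne_of_val_ne hpq.ne) fun k hk => by
      rw [hw, if_neg (Fin.val_ne_of_ne hk.1), if_neg (Fin.val_ne_of_ne hk.2), mul_zero]).trans
      (hrow j)
  exact ⟨hw0, hVw, fun ⟨A, hA⟩ => Matrix.setOf_mulVec_eq_infinite hA hVw hw0⟩

/-- Section IV, first observation of the paper: if two dyadic
intervals of level `m` fit inside one sampling interval `[t_i, t_{i+1})`, then the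
matrix `V` of Theorem 1 has a nonzero null vector `w` supported on those two indices,
so if the linear system `Y = V·A` has a solution it has infinitely many. -/
theorem linear_system_underdetermined
    (τ : ℝ) (hτ : 0 < τ) (m N : ℕ)
    (t : Fin (N + 1) → ℝ) (ht : StrictMono t)
    (y : Fin (N + 1) → ℝ)
    (V : Matrix (Fin N) (Fin (2 ^ m)) ℝ)
    (hV : ∀ (j : Fin N) (k : Fin (2 ^ m)),
      V j k =
        if ((k : ℕ) : ℝ) * (t (Fin.last N) - t 0) / (2 ^ m * τ) <
            min ((((k : ℕ) : ℝ) + 1) * (t (Fin.last N) - t 0) / (2 ^ m * τ))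
              ((t j.succ - t 0) / τ)
        then Real.exp (-(t j.succ - t 0) / τ) *
            (Real.exp (min ((((k : ℕ) : ℝ) + 1) * (t (Fin.last N) - t 0) / (2 ^ m * τ))
                ((t j.succ - t 0) / τ)) -
              Real.exp (((k : ℕ) : ℝ) * (t (Fin.last N) - t 0) / (2 ^ m * τ)))
        else 0)
    (Y : Fin N → ℝ)
    (hY : ∀ j : Fin N, Y j = y j.succ - y 0 * Real.exp (-(t j.succ - t 0) / τ))
    (i : Fin N) (p q : ℕ) (hpq : p < q) (hq : q < 2 ^ m)
    (hp_sub : Set.Ico (t 0 + (p : ℝ) * (t (Fin.last N) - t 0) / 2 ^ m)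
        (t 0 + ((p : ℝ) + 1) * (t (Fin.last N) - t 0) / 2 ^ m) ⊆
      Set.Ico (t i.castSucc) (t i.succ))
    (hq_sub : Set.Ico (t 0 + (q : ℝ) * (t (Fin.last N) - t 0) / 2 ^ m)
        (t 0 + ((q : ℝ) + 1) * (t (Fin.last N) - t 0) / 2 ^ m) ⊆
      Set.Ico (t i.castSucc) (t i.succ))
    (w : Fin (2 ^ m) → ℝ)
    (hw : ∀ k : Fin (2 ^ m),
      w k =
        if (k : ℕ) = p then
          Real.exp (((q : ℝ) + 1) * (t (Fin.last N) - t 0) / (2 ^ m * τ)) -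
            Real.exp ((q : ℝ) * (t (Fin.last N) - t 0) / (2 ^ m * τ))
        else if (k : ℕ) = q then
          -(Real.exp (((p : ℝ) + 1) * (t (Fin.last N) - t 0) / (2 ^ m * τ)) -
            Real.exp ((p : ℝ) * (t (Fin.last N) - t 0) / (2 ^ m * τ)))
        else 0) :
    w ≠ 0 ∧ V.mulVec w = 0 ∧
      ((∃ A : Fin (2 ^ m) → ℝ, V.mulVec A = Y) →
        {A : Fin (2 ^ m) → ℝ | V.mulVec A = Y}.Infinite) :=
  linear_system_underdetermined_general τ hτ m N t ht V hV Y i p q hpq hq hp_sub hq_sub w hw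
end
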